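/- Generalized diffusion identity: for the partial diffusion scheme F_n = P^{α_n}_{i_n} F_{n−1}, H_n = H_{n−1} + α_n J_{i_n} F_{n−1} with F_0 = B, H_0 = 0, one has H_n + F_n = P·H_n + B for all n. -/

import Mathlib

open Matrix BigOperators

/-- A step moves `a J f` into `h` and adds `a (P - 1) J f` to `f`; the two contributions cancel
in `h + f - P h`. -/
theorem diffusion_step_residual_eq {n R : Type*} [Fintype n] [DecidableEq n] [CommRing R]
    (P J : Matrix n n R) (a : R) (f h : n → R) :
    (h + a • (J *ᵥ f)) + (1 + a • ((P - 1) * J)) *ᵥ f - P *ᵥ (h + a • (J *ᵥ f)) =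
      h + f - P *ᵥ h := by
  simp only [add_mulVec, smul_mulVec, sub_mul, one_mul, sub_mulVec, ← mulVec_mulVec,
    one_mulVec, mulVec_add, mulVec_smul, smul_sub]
  abel

theorem partial_diffusion_identity_general {N : ℕ} (P : Matrix (Fin N) (Fin N) ℝ)
    (B : Fin N → ℝ) (α : ℕ → ℝ)
    (ι : ℕ → Fin N) (F H : ℕ → Fin N → ℝ)
    (hF0 : F 0 = B) (hH0 : H 0 = 0)
    (hF : ∀ n, F (n + 1) =
      (1 + α n • ((P - 1) * single (ι n) (ι n) 1)) *ᵥ F n)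
    (hH : ∀ n, H (n + 1) = H n + α n • (single (ι n) (ι n) 1 *ᵥ F n)) :
    ∀ n, H n + F n = P *ᵥ H n + B := by
  have residual : ∀ n, H n + F n - P *ᵥ H n = B := by
    intro n
    induction n with
    | zero => simp [hF0, hH0]
    | succ n ih => rw [hF, hH, diffusion_step_residual_eq, ih]
  exact fun n => sub_eq_iff_eq_add'.mp (residual n)

/-- generalized (partial) diffusion identity: for
`F_n = P^{α_n}_{i_n} F_{n-1}`, `H_n = H_{n-1} + α_n J_{i_n} F_{n-1}`, one has
`H_n + F_n = P·H_n + B` for all `n`, where `P^α_i = I + α(P-I)J_i`. -/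
theorem partial_diffusion_identity {N : ℕ} (P : Matrix (Fin N) (Fin N) ℝ)
    (B : Fin N → ℝ) (α : ℕ → ℝ) (hα : ∀ n, 0 ≤ α n)
    (ι : ℕ → Fin N) (F H : ℕ → Fin N → ℝ)
    (hF0 : F 0 = B) (hH0 : H 0 = 0)
    (hF : ∀ n, F (n + 1) =
      (1 + α n • ((P - 1) * single (ι n) (ι n) 1)) *ᵥ F n)
    (hH : ∀ n, H (n + 1) = H n + α n • (single (ι n) (ι n) 1 *ᵥ F n)) :
    ∀ n, H n + F n = P *ᵥ H n + B :=
  partial_diffusion_identity_general P B α ι F H hF0 hH0 hF hH
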